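/- Let q > p ≥ 3 be integers with q/p < 2 (i.e. q < 2p), let f = x^q − y^p ∈ R, and let 0 ≤ α ≤ 1 be rational. Then γ_α^{es}(f) ≥ 2·(q − 1 + α)². -/

import Mathlib

open MvPowerSeries

noncomputable section

/-- `R = ℂ⟦x,y⟧`, the ring of formal power series in two variables over `ℂ`. -/
abbrev R2 : Type := MvPowerSeries (Fin 2) ℂ

/-- The maximal ideal `m = ⟨x, y⟩` of `ℂ⟦x,y⟧`. -/
def mm : Ideal R2 := Ideal.span {X 0, X 1}

/-- `dim_ℂ R/I` as an extended natural number. -/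
def edim (I : Ideal R2) : ℕ∞ := Cardinal.toENat (Module.rank ℂ (R2 ⧸ I))

/-- `dim_ℂ R/I` as a natural number (junk value `0` when infinite). -/
def fdim (I : Ideal R2) : ℕ := (edim I).toNat

/-- The formal partial derivative of a power series with respect to the `i`-th variable. -/
def pd (i : Fin 2) (f : R2) : R2 :=
  fun d => ((d i : ℂ) + 1) * coeff (d + Finsupp.single i 1) f

/-- The Tjurina ideal `I^{ea}(f) = ⟨∂f/∂x, ∂f/∂y, f⟩`. -/
def Tjurina (f : R2) : Ideal R2 := Ideal.span {pd 0 f, pd 1 f, f}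

/-- The intersection multiplicity `i(f,g) = dim_ℂ R/⟨f,g⟩ ∈ ℕ ∪ {∞}`. -/
def interNum (f g : R2) : ℕ∞ := edim (Ideal.span {f, g})

/-- `λ_α(f;I,g) = (α·i(f,g) + (1−α)·dim_ℂ(R/I))² / (i(f,g) − dim_ℂ(R/I))`. -/
def lam (α : ℚ) (f : R2) (I : Ideal R2) (g : R2) : ℝ :=
  ((α : ℝ) * ((interNum f g).toNat : ℝ) + (1 - (α : ℝ)) * (fdim I : ℝ)) ^ 2 /
    (((interNum f g).toNat : ℝ) - (fdim I : ℝ))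

/-- `γ_α(f;I) = max({(1+α)²·dim_ℂ(R/I)} ∪ {λ_α(f;I,g) : g ∈ I, i(f,g) ≤ 2·dim_ℂ(R/I)})`. -/
def gam (α : ℚ) (f : R2) (I : Ideal R2) : ℝ :=
  sSup ({(1 + (α : ℝ)) ^ 2 * (fdim I : ℝ)} ∪
    {x : ℝ | ∃ g ∈ I, interNum f g ≤ 2 * edim I ∧ x = lam α f I g})

/-- A complete intersection ideal: zero-dimensional and generated by two elements. -/
def IsCI (I : Ideal R2) : Prop := edim I < ⊤ ∧ ∃ a b : R2, I = Ideal.span {a, b}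

/-- `γ_α^{ea}(f) = max({0} ∪ {γ_α(f;I) : I a complete intersection ideal,
`I^{ea}(f) ⊆ I ⊆ m`})`. -/
def gamEA (α : ℚ) (f : R2) : ℝ :=
  sSup ({0} ∪ {x : ℝ | ∃ I : Ideal R2, IsCI I ∧ Tjurina f ≤ I ∧ I ≤ mm ∧ x = gam α f I})

/-- The monomial ideal `⟨x^β y^γ : βp + γq ≥ pq⟩`. -/
def wIdeal (p q : ℕ) : Ideal R2 :=
  Ideal.span {s : R2 | ∃ β γ : ℕ, p * q ≤ p * β + q * γ ∧ s = X 0 ^ β * X 1 ^ γ}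

/-- The equisingularity ideal `E(f) = ⟨∂f/∂x, ∂f/∂y⟩ + ⟨x^β y^γ : βp + γq ≥ pq⟩` of a
convenient semi-quasihomogeneous power series of `(p,q)`-order `pq`. -/
def Esing (p q : ℕ) (f : R2) : Ideal R2 := Ideal.span {pd 0 f, pd 1 f} ⊔ wIdeal p q

/-- `γ_α^{es}(f) = max({0} ∪ {γ_α(f;I) : I a complete intersection ideal, E(f) ⊆ I ⊆ m})`. -/
def gamES (p q : ℕ) (α : ℚ) (f : R2) : ℝ :=
  sSup ({0} ∪ {x : ℝ | ∃ I : Ideal R2, IsCI I ∧ Esing p q f ≤ I ∧ I ≤ mm ∧ x = gam α f I})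

/-- The `(p,q)`-leading form of `f`: the sum of the terms of `(p,q)`-degree `pq`. -/
def leadForm (p q : ℕ) (f : R2) : R2 :=
  fun d => if p * d 0 + q * d 1 = p * q then coeff d f else 0

/-- `f` is convenient semi-quasihomogeneous w.r.t. `(p,q)` with `ord_{(p,q)}(f) = pq`:
all terms have weighted degree at least `pq`, the `(p,q)`-leading form is reduced
(squarefree), and the coefficients of `x^q` and `y^p` are nonzero. -/
def IsConvSQH (p q : ℕ) (f : R2) : Prop :=
  (∀ d : Fin 2 →₀ ℕ, coeff d f ≠ 0 → p * q ≤ p * d 0 + q * d 1) ∧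
  Squarefree (leadForm p q f) ∧
  coeff (Finsupp.single 0 q) f ≠ 0 ∧ coeff (Finsupp.single 1 p) f ≠ 0

/-!
Take `I = ⟨x^(q-1), y²⟩`, a complete intersection of colength `2(q-1)` inside `m`. It contains
`E(f)`: `∂f/∂x = q x^(q-1)`, `∂f/∂y = -p y^(p-1)` with `p ≥ 3`, and a monomial `x^β y^γ` outside
`I` has `β ≤ q-2`, `γ ≤ 1`, hence weighted degree `pβ + qγ ≤ p(q-2) + q < pq` because `q < 2p`.
For `g = y² ∈ I` we get `⟨f, g⟩ = ⟨x^q, y²⟩` of colength `2q ≤ 2·2(q-1)`, and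
`λ_α(f;I,g) = (2(q-1+α))² / 2`. The suprema defining `γ_α` and `γ_α^{es}` are over bounded sets,
since every admissible `I` contains `⟨x^q, y^p⟩` and so has colength at most `pq`.
-/

lemma mem_span_X_pow_pair_iff {a b : ℕ} {f : R2} :
    f ∈ Ideal.span {(X 0 ^ a : R2), X 1 ^ b} ↔
      ∀ d : Fin 2 →₀ ℕ, d 0 < a → d 1 < b → coeff d f = 0 := by
  rw [Ideal.mem_span_pair]
  constructor
  · rintro ⟨u, v, rfl⟩ d ha hb
    rw [map_add, X_pow_dvd_iff.mp (dvd_mul_left _ u) d ha,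
      X_pow_dvd_iff.mp (dvd_mul_left _ v) d hb, add_zero]
  · intro h
    -- `g` collects the terms of `f` divisible by `x^a`; the hypothesis makes `y^b` divide the rest.
    set g : R2 := fun d => if a ≤ d 0 then coeff d f else 0
    obtain ⟨u, hu⟩ : X 0 ^ a ∣ g := X_pow_dvd_iff.mpr fun d hd => if_neg (by omega)
    obtain ⟨v, hv⟩ : X 1 ^ b ∣ f - g := X_pow_dvd_iff.mpr fun d hd => by
      rw [map_sub, coeff_apply g]
      by_cases ha : a ≤ d 0
      · simp [g, ha]
      · simpa [g, ha] using h d (by omega) hd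
    exact ⟨u, v, by rw [mul_comm u, mul_comm v, ← hu, ← hv]; ring⟩

lemma X_pow_mul_X_pow_mem_span {a b m n : ℕ} (h : a ≤ m ∨ b ≤ n) :
    (X 0 ^ m * X 1 ^ n : R2) ∈ Ideal.span {(X 0 ^ a : R2), X 1 ^ b} := by
  rcases h with h | h
  · exact Ideal.mem_of_dvd _ (Dvd.dvd.mul_right (pow_dvd_pow _ h) _)
      (Ideal.subset_span (Set.mem_insert _ _))
  · exact Ideal.mem_of_dvd _ (Dvd.dvd.mul_left (pow_dvd_pow _ h) _)
      (Ideal.subset_span (Set.mem_insert_of_mem _ rfl))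

def boxCoeffs (a b : ℕ) : R2 →ₗ[ℂ] (Fin a × Fin b → ℂ) :=
  LinearMap.pi fun ij => coeff (Finsupp.single 0 (ij.1 : ℕ) + Finsupp.single 1 (ij.2 : ℕ))

lemma boxCoeffs_surjective (a b : ℕ) : Function.Surjective (boxCoeffs a b) := by
  intro c
  refine ⟨∑ ij, monomial (Finsupp.single 0 (ij.1 : ℕ) + Finsupp.single 1 (ij.2 : ℕ)) (c ij), ?_⟩
  funext ij
  simp only [boxCoeffs, LinearMap.pi_apply, map_sum, coeff_monomial]
  rw [Finset.sum_eq_single ij (fun kl _ hne => if_neg fun h => hne ?_) (by simp), if_pos rfl]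
  have h0 := congrArg (· 0) h
  have h1 := congrArg (· 1) h
  simp at h0 h1
  exact Prod.ext (Fin.ext h0.symm) (Fin.ext h1.symm)

lemma ker_boxCoeffs (a b : ℕ) :
    LinearMap.ker (boxCoeffs a b) = (Ideal.span {(X 0 ^ a : R2), X 1 ^ b}).restrictScalars ℂ := by
  ext f
  simp only [LinearMap.mem_ker, Submodule.restrictScalars_mem, mem_span_X_pow_pair_iff, funext_iff,
    boxCoeffs, LinearMap.pi_apply, Pi.zero_apply, Prod.forall, Fin.forall_iff]
  constructor
  · intro hf d hd0 hd1
    convert hf _ hd0 _ hd1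
    ext i
    fin_cases i <;> simp
  · intro hf i hi j hj
    exact hf _ (by simpa using hi) (by simpa using hj)

lemma edim_span_X_pow_pair (a b : ℕ) :
    edim (Ideal.span {(X 0 ^ a : R2), X 1 ^ b}) = (a * b : ℕ) := by
  set I := Ideal.span {(X 0 ^ a : R2), X 1 ^ b}
  have e : (R2 ⧸ I) ≃ₗ[ℂ] (Fin a × Fin b → ℂ) :=
    (Submodule.Quotient.restrictScalarsEquiv ℂ (I : Submodule R2 R2)).symm.trans
      (ker_boxCoeffs a b ▸ (boxCoeffs a b).quotKerEquivOfSurjective (boxCoeffs_surjective a b))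
  rw [edim, e.rank_eq, rank_fun']
  simp

lemma edim_antitone {I J : Ideal R2} (h : I ≤ J) : edim J ≤ edim I :=
  Cardinal.toENat.monotone' <|
    LinearMap.rank_le_of_surjective (Ideal.Quotient.factorₐ ℂ h).toLinearMap
      (Ideal.Quotient.factor_surjective h)

lemma coeff_pd (i : Fin 2) (f : R2) (d : Fin 2 →₀ ℕ) :
    coeff d (pd i f) = ((d i : ℂ) + 1) * coeff (d + Finsupp.single i 1) f :=
  rfl

lemma pd_sub (i : Fin 2) (f g : R2) : pd i (f - g) = pd i f - pd i g := by
  ext d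
  simp only [coeff_pd, map_sub, mul_sub]

lemma pd_X_pow_succ (i : Fin 2) (n : ℕ) : pd i (X i ^ (n + 1)) = (n + 1 : ℂ) • X i ^ n := by
  ext d
  have hd : d + Finsupp.single i 1 = Finsupp.single i (n + 1) ↔ d = Finsupp.single i n := by
    rw [Finsupp.single_add, add_left_inj]
  simp only [coeff_pd, coeff_X_pow, hd, map_smul, smul_eq_mul]
  split_ifs with h <;> simp [h]

lemma pd_X_pow_of_ne {i j : Fin 2} (hij : i ≠ j) (n : ℕ) : pd i (X j ^ n) = 0 := by
  ext d
  have hd : d + Finsupp.single i 1 ≠ Finsupp.single j n := fun h => by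
    simpa [Finsupp.single_apply, hij.symm] using congrArg (· i) h
  simp [coeff_pd, coeff_X_pow, hd]

lemma span_X_pow_pair_le_mm {a b : ℕ} (ha : a ≠ 0) (hb : b ≠ 0) :
    Ideal.span {(X 0 ^ a : R2), X 1 ^ b} ≤ mm := by
  rw [Ideal.span_le, Set.insert_subset_iff, Set.singleton_subset_iff]
  exact ⟨Ideal.pow_mem_of_mem _ (Ideal.subset_span (by simp)) _ (Nat.pos_of_ne_zero ha),
    Ideal.pow_mem_of_mem _ (Ideal.subset_span (by simp)) _ (Nat.pos_of_ne_zero hb)⟩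

lemma span_X_pow_pair_le_wIdeal (p q : ℕ) :
    Ideal.span {(X 0 ^ q : R2), X 1 ^ p} ≤ wIdeal p q := by
  rw [Ideal.span_le, Set.insert_subset_iff, Set.singleton_subset_iff]
  exact ⟨Ideal.subset_span ⟨q, 0, by simp, by simp⟩,
    Ideal.subset_span ⟨0, p, by rw [mul_comm]; simp, by simp⟩⟩

lemma esing_X_pow_sub_X_pow_le {p q : ℕ} (hp : 3 ≤ p) (hq : 2 ≤ q) (hq2p : q < 2 * p) :
    Esing p q (X 0 ^ q - X 1 ^ p) ≤ Ideal.span {(X 0 ^ (q - 1) : R2), X 1 ^ 2} := by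
  obtain ⟨q, rfl⟩ : ∃ q', q = q' + 1 := ⟨q - 1, by omega⟩
  obtain ⟨p, rfl⟩ : ∃ p', p = p' + 1 := ⟨p - 1, by omega⟩
  refine sup_le ?_ ?_
  · rw [Ideal.span_le, Set.insert_subset_iff, Set.singleton_subset_iff]
    simp only [pd_sub, pd_X_pow_succ, pd_X_pow_of_ne (show (0 : Fin 2) ≠ 1 by decide),
      pd_X_pow_of_ne (show (1 : Fin 2) ≠ 0 by decide), sub_zero, zero_sub, SetLike.mem_coe,
      Nat.add_sub_cancel]
    refine ⟨Submodule.smul_of_tower_mem _ _ (Ideal.subset_span (by simp)),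
      neg_mem (Submodule.smul_of_tower_mem _ _ ?_)⟩
    exact Ideal.mem_of_dvd _ (pow_dvd_pow (X 1) (by omega : 2 ≤ p)) (Ideal.subset_span (by simp))
  · rw [wIdeal, Ideal.span_le]
    rintro _ ⟨β, γ, hw, rfl⟩
    refine X_pow_mul_X_pow_mem_span ?_
    by_contra! h
    have hβ : (p + 1) * (β + 2) ≤ (p + 1) * (q + 1) := Nat.mul_le_mul_left _ (by omega)
    have hγ : (q + 1) * γ ≤ (q + 1) * 1 := Nat.mul_le_mul_left _ (by omega)
    nlinarith

lemma interNum_X_pow_sub_X_pow {p : ℕ} (hp : 2 ≤ p) (q : ℕ) :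
    interNum (X 0 ^ q - X 1 ^ p) (X 1 ^ 2) = (q * 2 : ℕ) := by
  have hspan : Ideal.span {(X 0 ^ q - X 1 ^ p : R2), X 1 ^ 2} = Ideal.span {X 0 ^ q, X 1 ^ 2} := by
    rw [← Ideal.span_pair_add_mul_right (z := X 1 ^ (p - 2))]
    congr
    rw [← pow_add, Nat.sub_add_cancel hp]
    ring
  rw [interNum, hspan, edim_span_X_pow_pair]

/-- `λ_α(f;I,g)` depends on `g` only through `i(f,g)`, which is at most `2N` when
`dim_ℂ R/I ≤ N`; so `γ_α(f;I)` is a maximum over finitely many values, uniformly in such `I`. -/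
def gamCandidates (α : ℚ) (N : ℕ) : Set ℝ :=
  (fun D : ℕ => (1 + (α : ℝ)) ^ 2 * D) '' Set.Iic N ∪
    (fun nD : ℕ × ℕ => ((α : ℝ) * nD.1 + (1 - α) * nD.2) ^ 2 / (nD.1 - nD.2)) ''
      (Set.Iic (2 * N) ×ˢ Set.Iic N)

lemma finite_gamCandidates (α : ℚ) (N : ℕ) : (gamCandidates α N).Finite :=
  ((Set.finite_Iic N).image _).union (((Set.finite_Iic _).prod (Set.finite_Iic N)).image _)

lemma gam_set_subset_gamCandidates (α : ℚ) (f : R2) {I : Ideal R2} {N : ℕ}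
    (hI : edim I ≤ N) :
    {(1 + (α : ℝ)) ^ 2 * (fdim I : ℝ)} ∪
      {x : ℝ | ∃ g ∈ I, interNum f g ≤ 2 * edim I ∧ x = lam α f I g} ⊆ gamCandidates α N := by
  have hD : fdim I ≤ N := ENat.toNat_le_of_le_natCast hI
  rintro x (rfl | ⟨g, -, hg, rfl⟩)
  · exact Or.inl ⟨_, hD, rfl⟩
  · have hn : (interNum f g).toNat ≤ 2 * N :=
      ENat.toNat_le_of_le_natCast (hg.trans (by push_cast; gcongr))
    exact Or.inr ⟨(_, _), ⟨hn, hD⟩, rfl⟩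

lemma exists_forall_gam_le (α : ℚ) (f : R2) (N : ℕ) :
    ∃ B, ∀ I : Ideal R2, edim I ≤ N → gam α f I ≤ B := by
  obtain ⟨B, hB⟩ := (finite_gamCandidates α N).bddAbove
  exact ⟨B, fun I hI => csSup_le (Set.singleton_nonempty _).inl
    fun x hx => hB (gam_set_subset_gamCandidates α f hI hx)⟩

lemma lam_le_gam {α : ℚ} {f g : R2} {I : Ideal R2} (hI : edim I < ⊤) (hg : g ∈ I)
    (h : interNum f g ≤ 2 * edim I) : lam α f I g ≤ gam α f I :=
  le_csSup ((finite_gamCandidates α (fdim I)).bddAbove.mono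
      (gam_set_subset_gamCandidates α f (ENat.natCast_toNat hI.ne).ge))
    (Or.inr ⟨g, hg, h, rfl⟩)

lemma gam_le_gamES {p q : ℕ} {α : ℚ} {f : R2} {I : Ideal R2} (hCI : IsCI I)
    (hE : Esing p q f ≤ I) (hm : I ≤ mm) : gam α f I ≤ gamES p q α f := by
  obtain ⟨B, hB⟩ := exists_forall_gam_le α f (q * p)
  refine le_csSup ⟨max 0 B, ?_⟩ (Or.inr ⟨I, hCI, hE, hm, rfl⟩)
  rintro _ (rfl | ⟨J, -, hEJ, -, rfl⟩)
  · exact le_max_left _ _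
  · refine (hB J ?_).trans (le_max_right _ _)
    rw [← edim_span_X_pow_pair]
    exact edim_antitone ((span_X_pow_pair_le_wIdeal p q).trans (le_sup_right.trans hEJ))

theorem stmt19_general (p q : ℕ) (hp : 3 ≤ p) (hpq : p < q) (hq2p : q < 2 * p)
    (α : ℚ) :
    2 * ((q : ℝ) - 1 + α) ^ 2 ≤ gamES p q α (X 0 ^ q - X 1 ^ p) := by
  set f : R2 := X 0 ^ q - X 1 ^ p
  set I : Ideal R2 := Ideal.span {X 0 ^ (q - 1), X 1 ^ 2}
  have hdim : edim I = ((q - 1) * 2 : ℕ) := edim_span_X_pow_pair _ _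
  have hint : interNum f (X 1 ^ 2) = (q * 2 : ℕ) := interNum_X_pow_sub_X_pow (by omega) q
  have hCI : IsCI I := ⟨hdim ▸ ENat.natCast_lt_top _, _, _, rfl⟩
  calc 2 * ((q : ℝ) - 1 + α) ^ 2 = lam α f I (X 1 ^ 2) := by
        rw [lam, hint, fdim, hdim, ENat.toNat_natCast, ENat.toNat_natCast]
        push_cast [Nat.cast_sub (by omega : 1 ≤ q)]
        ring
    _ ≤ gam α f I := lam_le_gam hCI.1 (Ideal.subset_span (by simp)) <| by
        rw [hint, hdim]
        exact_mod_cast (by omega : q * 2 ≤ 2 * ((q - 1) * 2))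
    _ ≤ gamES p q α f :=
        gam_le_gamES hCI (esing_X_pow_sub_X_pow_le hp (by omega) hq2p)
          (span_X_pow_pair_le_mm (by omega) two_ne_zero)

/-- For integers `q > p ≥ 3` with `q < 2p`, `f = x^q − y^p` and rational
`0 ≤ α ≤ 1`: `γ_α^{es}(f) ≥ 2·(q − 1 + α)²`. -/
theorem stmt19 (p q : ℕ) (hp : 3 ≤ p) (hpq : p < q) (hq2p : q < 2 * p)
    (α : ℚ) (hα0 : 0 ≤ α) (hα1 : α ≤ 1) :
    2 * ((q : ℝ) - 1 + α) ^ 2 ≤ gamES p q α (X 0 ^ q - X 1 ^ p) :=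
  stmt19_general p q hp hpq hq2p α

end
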